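/- In a sovereign monoidal category with simple and absolutely simple tensor unit, an object X is invertible if and only if the duality morphisms b_X : 1 → X ⊗ X^∨ and b̃_X : 1 → X^∨ ⊗ X are invertible. -/

import Mathlib

/-!
If `X ⊗ X' ≅ 𝟙` and `X' ⊗ X ≅ 𝟙`, tensoring on the right with `X` is an autoequivalence. An exact
pairing `(X, Y)` makes `- ⊗ Y` right adjoint to `- ⊗ X`, and the unit of this adjunction at `𝟙` is
`η_ X Y` up to unitors; the unit of an adjunction with fully faithful left adjoint is invertible.
The right adjoint `- ⊗ Y` of an equivalence is again an equivalence, so the same argument applied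
to the pairing `(Y, X)` makes `η_ Y X` invertible. Conversely, invertible coevaluations exhibit `Y`
as a tensor inverse of `X`.
-/

open CategoryTheory MonoidalCategory

namespace CategoryTheory.MonoidalCategory

variable {C : Type*} [Category C] [MonoidalCategory C]

def tensorRightEquivalence {X X' : C} (e : X ⊗ X' ≅ 𝟙_ C) (f : X' ⊗ X ≅ 𝟙_ C) : C ≌ C :=
  Equivalence.mk (tensorRight X) (tensorRight X')
    ((rightUnitorNatIso C).symm ≪≫ (tensoringRight C).mapIso e.symm ≪≫ tensorRightTensor X X')
    ((tensorRightTensor X' X).symm ≪≫ (tensoringRight C).mapIso f ≪≫ rightUnitorNatIso C)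

theorem tensorRightAdjunction_unit_app (X Y A : C) [ExactPairing X Y] :
    (tensorRightAdjunction X Y).unit.app A = (ρ_ A).inv ≫ A ◁ η_ X Y ≫ (α_ A X Y).inv := by
  simp [tensorRightAdjunction, tensorRightHomEquiv]

theorem isIso_coevaluation_of_full_of_faithful (X Y : C) [ExactPairing X Y]
    [(tensorRight X).Full] [(tensorRight X).Faithful] : IsIso (η_ X Y) := by
  have h : IsIso ((tensorRightAdjunction X Y).unit.app (𝟙_ C)) := inferInstance
  rw [tensorRightAdjunction_unit_app, id_whiskerLeft] at h
  simpa using h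

end CategoryTheory.MonoidalCategory

theorem invertible_iff_coevaluations_isIso_general
    {C : Type*} [Category C] [MonoidalCategory C]
    (X Y : C) [ExactPairing X Y] [ExactPairing Y X] :
    (∃ X' : C, Nonempty (X ⊗ X' ≅ 𝟙_ C) ∧ Nonempty (X' ⊗ X ≅ 𝟙_ C)) ↔
      (IsIso (η_ X Y) ∧ IsIso (η_ Y X)) := by
  constructor
  · rintro ⟨X', ⟨e⟩, ⟨f⟩⟩
    have : (tensorRight X).IsEquivalence := (tensorRightEquivalence e f).isEquivalence_functor
    have : (tensorRight Y).IsEquivalence :=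
      (tensorRightAdjunction X Y).isEquivalence_right_of_isEquivalence_left
    exact ⟨isIso_coevaluation_of_full_of_faithful X Y, isIso_coevaluation_of_full_of_faithful Y X⟩
  · rintro ⟨_, _⟩
    exact ⟨Y, ⟨(asIso (η_ X Y)).symm⟩, ⟨(asIso (η_ Y X)).symm⟩⟩

/-- In a sovereign monoidal category (encoded here by an object `X` having a two-sided
dual `Y`, i.e. exact pairings in both orders) with simple and absolutely simple tensor
unit, `X` is invertible iff the coevaluations `b_X : 𝟙 ⟶ X ⊗ Y` and
`b̃_X : 𝟙 ⟶ Y ⊗ X` are invertible. -/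
theorem invertible_iff_coevaluations_isIso
    {k : Type*} [Field k] {C : Type*} [Category C] [MonoidalCategory C]
    [Preadditive C] [Linear k C] [MonoidalPreadditive C]
    (hsimple : Simple (𝟙_ C))
    (habs : ∀ f : 𝟙_ C ⟶ 𝟙_ C, ∃ c : k, f = c • 𝟙 (𝟙_ C))
    (X Y : C) [ExactPairing X Y] [ExactPairing Y X] :
    (∃ X' : C, Nonempty (X ⊗ X' ≅ 𝟙_ C) ∧ Nonempty (X' ⊗ X ≅ 𝟙_ C)) ↔
      (IsIso (η_ X Y) ∧ IsIso (η_ Y X)) :=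
  invertible_iff_coevaluations_isIso_general X Y
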